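/- For z > 0, λ = e^{-z}, ν = λ(1 - e^{-ϑ}) with 0 ≤ ϑ ≤ w^{-1/3}, w ≥ 2 with w/z a positive integer, one has ∑_{0 ≤ k ≤ w/z} (-1)^k ν^k (w - kz)^k / k! ≪ e^{-wν/(1 - zν)} w², with implied constant depending only on z. -/

import Mathlib

/-!
Put `a = zν`. Since `w = Kz`, the sum is `T = ∑_{k ≤ K} (-a(K-k))^k / k!`, the coefficient of
`s^K` in `∑_{m ≤ K} (s e^{-as})^m`, and `wν/(1 - zν) = Ka/(1 - a)`. From `z e^{-z} ≤ e^{-1}` and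
`ϑ ≤ 2^{-1/3}` we get `0 ≤ a ≤ 3/10`.

Extracting the coefficient by Cauchy's formula on `|s| = 2` and summing the geometric series,
`2πi T = ∮ e^{-aKs} / (s - e^{as}) ds - ∮ e^{as} / (s^{K+1} (s - e^{as})) ds`.
On `|s| ≤ 2` the map `s ↦ e^{as}` is a contraction, so `s = e^{as}` has exactly one root there,
a real `ρ` with `ρ ≥ 1 + aρ`, i.e. `ρ ≥ 1/(1-a)`. The first integral is the residue
`2πi e^{-aKρ}/(1 - aρ) ≪ e^{-Ka/(1-a)}`, and the second is `O(2^{-K})`, which is also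
`≪ e^{-Ka/(1-a)}` because `a/(1-a) ≤ 3/7 < log 2`.
-/

open Real Finset Complex Metric

theorem exp_three_fifths_lt : Real.exp (3 / 5) < 11 / 6 := by
  have := Real.exp_bound' (x := 3 / 5) (by norm_num) (by norm_num) (n := 4) (by norm_num)
  norm_num [Finset.sum_range_succ, Nat.factorial] at this
  linarith

theorem exp_three_sevenths_lt_two : Real.exp (3 / 7) < 2 := by
  have h : (3 / 7 : ℝ) < Real.log 2 := by linarith [Real.log_two_gt_d9]
  simpa [Real.exp_log] using Real.exp_lt_exp.2 h

theorem rpow_neg_one_third_le {w : ℝ} (hw : 2 ≤ w) : w ^ (-(1 : ℝ) / 3) ≤ 4 / 5 := by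
  have hcube : (w ^ (-(1 : ℝ) / 3)) ^ 3 = w⁻¹ := by
    rw [← Real.rpow_natCast, ← Real.rpow_mul (by linarith)]
    norm_num [Real.rpow_neg_one]
  have : w⁻¹ ≤ 1 / 2 := by rw [inv_le_comm₀ (by linarith) (by norm_num)]; linarith
  by_contra! h
  nlinarith [pow_lt_pow_left₀ h (by norm_num) (by norm_num : (3 : ℕ) ≠ 0)]

theorem mul_exp_neg_mul_one_sub_exp_neg_le (z : ℝ) {ϑ : ℝ} (hϑ0 : 0 ≤ ϑ) (hϑ : ϑ ≤ 4 / 5) :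
    z * (Real.exp (-z) * (1 - Real.exp (-ϑ))) ≤ 3 / 10 := by
  have hze : z * Real.exp (-z) ≤ 3 / 8 := by
    refine (Real.mul_exp_neg_le_exp_neg_one z).trans ?_
    rw [Real.exp_neg, inv_le_comm₀ (Real.exp_pos 1) (by norm_num)]
    linarith [Real.exp_one_gt_d9]
  have h0 : 0 ≤ 1 - Real.exp (-ϑ) := sub_nonneg.2 (Real.exp_le_one_iff.2 (neg_nonpos.2 hϑ0))
  have h1 : 1 - Real.exp (-ϑ) ≤ 4 / 5 := by linarith [Real.add_one_le_exp (-ϑ)]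
  nlinarith [mul_nonneg (Real.exp_pos (-z)).le h0]

theorem circleIntegral_cexp_mul_div_pow {R : ℝ} (hR : 0 < R) (b : ℂ) (n : ℕ) :
    ∮ z in C(0, R), cexp (b * z) / z ^ (n + 1) = 2 * π * I * (b ^ n / n.factorial) := by
  have := (Complex.differentiable_exp.comp (differentiable_id.const_mul b)).differentiableOn
    |>.circleIntegral_one_div_sub_center_pow_smul (c := 0) hR n
  simp only [sub_zero, iteratedDeriv_cexp_const_mul, Function.comp_def, id] at this
  simpa [div_eq_inv_mul, mul_comm, mul_left_comm, mul_assoc] using this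

theorem circleIntegral_div_eq_of_simple_zero {f h : ℂ → ℂ} {c w : ℂ} {R : ℝ}
    (hf : DifferentiableOn ℂ f (closedBall c R)) (hh : DifferentiableOn ℂ h (closedBall c R))
    (hw : w ∈ ball c R) (hzero : ∀ z ∈ closedBall c R, h z = 0 ↔ z = w) (hd : deriv h w ≠ 0) :
    ∮ z in C(c, R), f z / h z = 2 * π * I * (f w / deriv h w) := by
  have hR : 0 ≤ R := dist_nonneg.trans (mem_ball.1 hw).le
  have hhw : h w = 0 := (hzero w (ball_subset_closedBall hw)).2 rfl
  have hfactor : ∀ z, h z = (z - w) * dslope h w z := fun z => by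
    simpa [hhw] using (sub_smul_dslope h w z).symm
  have hG : DifferentiableOn ℂ (dslope h w) (closedBall c R) :=
    (differentiableOn_dslope (closedBall_mem_nhds_of_mem hw)).2 hh
  have hG0 : ∀ z ∈ closedBall c R, dslope h w z ≠ 0 := by
    intro z hz hG0
    by_cases hzw : z = w
    · exact hd (by rwa [hzw, dslope_same] at hG0)
    · exact hzw ((hzero z hz).1 (by rw [hfactor, hG0, mul_zero]))
  calc ∮ z in C(c, R), f z / h z = ∮ z in C(c, R), (z - w)⁻¹ • (f z / dslope h w z) := by
        refine circleIntegral.integral_congr hR fun z hz => ?_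
        have hzw : z - w ≠ 0 := sub_ne_zero.2 fun h => by
          rw [mem_sphere, h] at hz; exact (mem_ball.1 hw).ne hz
        have hGz := hG0 z (sphere_subset_closedBall hz)
        rw [hfactor, smul_eq_mul]
        field_simp
    _ = 2 * π * I * (f w / deriv h w) := by
        simpa [dslope_same] using (hf.div hG hG0).circleIntegral_sub_inv_smul hw

theorem sum_cexp_div_pow_eq (a : ℂ) (K : ℕ) {s : ℂ} (hs : s ≠ 0) (hfix : s - cexp (a * s) ≠ 0) :
    ∑ k ∈ range (K + 1), cexp (-(a * (K - k)) * s) / s ^ (k + 1)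
      = cexp (-(a * K) * s) / (s - cexp (a * s))
        - cexp (a * s) / (s ^ (K + 1) * (s - cexp (a * s))) := by
  set v : ℕ → ℂ := fun k => cexp (-(a * (K - k)) * s) / s ^ k
  have hstep : ∀ k : ℕ, cexp (-(a * (K - k)) * s) / s ^ (k + 1) * (s - cexp (a * s))
      = v k - v (k + 1) := fun k => by
    have : cexp (-(a * (K - k)) * s) * cexp (a * s) = cexp (-(a * (K - (k + 1 : ℕ))) * s) := by
      rw [← Complex.exp_add]; push_cast; ring_nf
    simp only [v, ← this]
    field_simp
    ring
  have hv0 : v 0 = cexp (-(a * K) * s) := by simp [v]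
  have hvK : v (K + 1) = cexp (a * s) / s ^ (K + 1) := by
    simp only [v]; push_cast; ring_nf
  rw [← div_div, ← sub_div, ← hv0, ← hvK, ← sum_range_sub', eq_div_iff hfix, sum_mul]
  exact sum_congr rfl fun k _ => hstep k

section

variable {a : ℝ}

theorem norm_cexp_mul_le (ha0 : 0 ≤ a) (ha : a ≤ 3 / 10) {s : ℂ} (hs : ‖s‖ ≤ 2) :
    ‖cexp (a * s)‖ ≤ 11 / 6 := by
  rw [Complex.norm_exp, re_ofReal_mul]
  refine (Real.exp_le_exp.2 ?_).trans exp_three_fifths_lt.le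
  nlinarith [(re_le_norm s).trans hs]

theorem one_sixth_le_norm_sub_cexp (ha0 : 0 ≤ a) (ha : a ≤ 3 / 10) {s : ℂ} (hs : ‖s‖ = 2) :
    1 / 6 ≤ ‖s - cexp (a * s)‖ := by
  linarith [norm_sub_norm_le s (cexp (a * s)), norm_cexp_mul_le ha0 ha hs.le]

theorem exists_exp_mul_eq_self (ha : a ≤ 3 / 10) :
    ∃ ρ : ℝ, ρ < 2 ∧ Real.exp (a * ρ) = ρ := by
  have h2 : Real.exp (a * 2) < 2 :=
    (Real.exp_le_exp.2 (by linarith)).trans_lt (exp_three_fifths_lt.trans (by norm_num))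
  have hmem : (0 : ℝ) ∈ Set.Icc (Real.exp (a * 2) - 2) (Real.exp (a * 0) - 0) :=
    ⟨by linarith, by simp⟩
  obtain ⟨ρ, hρ, hρ0⟩ := intermediate_value_Icc' (f := fun s => Real.exp (a * s) - s)
    zero_le_two (by fun_prop) hmem
  refine ⟨ρ, lt_of_le_of_ne hρ.2 fun h => ?_, by linarith [hρ0]⟩
  simp only [h] at hρ0
  linarith

theorem eq_of_cexp_mul_eq_self (ha0 : 0 ≤ a) (ha : a ≤ 3 / 10) {t u : ℂ}
    (ht : ‖t‖ ≤ 2) (hu : ‖u‖ ≤ 2) (htf : cexp (a * t) = t) (huf : cexp (a * u) = u) :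
    t = u := by
  have hderiv : ∀ s ∈ closedBall (0 : ℂ) 2, ‖deriv (fun s => cexp (a * s)) s‖ ≤ a * (11 / 6) := by
    intro s hs
    have hd : HasDerivAt (fun s => cexp (a * s)) (cexp (a * s) * a) s := by
      simpa using ((hasDerivAt_id s).const_mul (a : ℂ)).cexp
    rw [hd.deriv, norm_mul, Complex.norm_real, Real.norm_of_nonneg ha0, mul_comm]
    exact mul_le_mul_of_nonneg_left (norm_cexp_mul_le ha0 ha (by simpa using hs)) ha0
  have hlip := (convex_closedBall (0 : ℂ) 2).norm_image_sub_le_of_norm_deriv_le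
    (fun s _ => by fun_prop) hderiv (by simpa using hu) (by simpa using ht)
  rw [htf, huf] at hlip
  have : ‖t - u‖ = 0 := by nlinarith [norm_nonneg (t - u)]
  rwa [norm_eq_zero, sub_eq_zero] at this

theorem circleIntegral_cexp_div_sub_cexp (ha0 : 0 ≤ a) (ha : a ≤ 3 / 10) {ρ : ℝ} (hρ2 : ρ < 2)
    (hρ : Real.exp (a * ρ) = ρ) (K : ℕ) :
    ∮ s in C(0, 2), cexp (-(a * K) * s) / (s - cexp (a * s))
      = 2 * π * I * ↑(Real.exp (-(a * K * ρ)) / (1 - a * ρ)) := by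
  have hρ0 : 0 < ρ := hρ ▸ Real.exp_pos _
  have hρC : cexp (a * ρ) = ρ := by exact_mod_cast congrArg ((↑) : ℝ → ℂ) hρ
  have hderiv : HasDerivAt (fun s : ℂ => s - cexp (a * s)) (1 - a * ρ) ρ := by
    refine ((hasDerivAt_id' (ρ : ℂ)).sub
      ((hasDerivAt_id' (ρ : ℂ)).const_mul (a : ℂ)).cexp).congr_deriv ?_
    rw [hρC]; ring
  have haρ : a * ρ < 1 := by nlinarith
  rw [circleIntegral_div_eq_of_simple_zero (by fun_prop) (by fun_prop), hderiv.deriv]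
  · push_cast
    rw [neg_mul]
  · simpa [abs_of_pos hρ0] using hρ2
  · intro s hs
    refine ⟨fun h => ?_, by rintro rfl; rw [hρC, sub_self]⟩
    refine eq_of_cexp_mul_eq_self ha0 ha (by simpa using hs) ?_ (sub_eq_zero.1 h).symm hρC
    simpa [abs_of_pos hρ0] using hρ2.le
  · rw [hderiv.deriv]
    exact_mod_cast sub_ne_zero.2 haρ.ne'

theorem norm_circleIntegral_remainder_le (ha0 : 0 ≤ a) (ha : a ≤ 3 / 10) (K : ℕ) :
    ‖∮ s in C(0, 2), cexp (a * s) / (s ^ (K + 1) * (s - cexp (a * s)))‖ ≤ 2 * π * (11 / 2 ^ K) := by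
  have hbound : ∀ s ∈ sphere (0 : ℂ) 2,
      ‖cexp (a * s) / (s ^ (K + 1) * (s - cexp (a * s)))‖ ≤ 11 / 2 ^ (K + 1) := by
    intro s hs
    have hs2 : ‖s‖ = 2 := by simpa using hs
    have hexp := norm_cexp_mul_le ha0 ha hs2.le
    have hden := one_sixth_le_norm_sub_cexp ha0 ha hs2
    rw [norm_div, norm_mul, norm_pow, hs2, div_le_div_iff₀ (by positivity) (by positivity)]
    nlinarith [pow_pos (two_pos : (0 : ℝ) < 2) (K + 1)]
  calc _ ≤ 2 * π * 2 * (11 / 2 ^ (K + 1)) :=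
        circleIntegral.norm_integral_le_of_norm_le_const zero_le_two hbound
    _ = 2 * π * (11 / 2 ^ K) := by rw [pow_succ]; field_simp

theorem abs_sum_sub_residue_le (ha0 : 0 ≤ a) (ha : a ≤ 3 / 10) {ρ : ℝ} (hρ2 : ρ < 2)
    (hρ : Real.exp (a * ρ) = ρ) (K : ℕ) :
    |∑ k ∈ range (K + 1), (-(a * (K - k))) ^ k / k.factorial
        - Real.exp (-(a * K * ρ)) / (1 - a * ρ)| ≤ 11 / 2 ^ K := by
  set T := ∑ k ∈ range (K + 1), (-(a * (K - k))) ^ k / k.factorial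
  set V := Real.exp (-(a * K * ρ)) / (1 - a * ρ)
  set Rem := ∮ s in C(0, 2), cexp (a * s) / (s ^ (K + 1) * (s - cexp (a * s)))
  have hsphere : ∀ s ∈ sphere (0 : ℂ) 2, s ≠ 0 ∧ s - cexp (a * s) ≠ 0 := by
    intro s hs
    have hs2 : ‖s‖ = 2 := by simpa using hs
    refine ⟨by rintro rfl; simp at hs2, fun h => ?_⟩
    have := one_sixth_le_norm_sub_cexp ha0 ha hs2
    rw [h, norm_zero] at this
    linarith
  have hcoeff : ∮ s in C(0, 2), ∑ k ∈ range (K + 1), cexp (-(a * (K - k)) * s) / s ^ (k + 1)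
      = 2 * π * I * T := by
    rw [circleIntegral.integral_fun_sum]
    · simp only [T]
      push_cast
      rw [mul_sum]
      exact sum_congr rfl fun k _ => circleIntegral_cexp_mul_div_pow two_pos _ k
    · intro k _
      refine ContinuousOn.circleIntegrable zero_le_two (ContinuousOn.div (by fun_prop) (by fun_prop)
        fun s hs => pow_ne_zero _ (hsphere s hs).1)
  have hsplit : ∮ s in C(0, 2), ∑ k ∈ range (K + 1), cexp (-(a * (K - k)) * s) / s ^ (k + 1)
      = 2 * π * I * V - Rem := by
    rw [circleIntegral.integral_congr zero_le_two fun s hs =>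
      sum_cexp_div_pow_eq a K (hsphere s hs).1 (hsphere s hs).2, circleIntegral.integral_sub,
      circleIntegral_cexp_div_sub_cexp ha0 ha hρ2 hρ]
    · exact ContinuousOn.circleIntegrable zero_le_two (ContinuousOn.div (by fun_prop) (by fun_prop)
        fun s hs => (hsphere s hs).2)
    · exact ContinuousOn.circleIntegrable zero_le_two (ContinuousOn.div (by fun_prop) (by fun_prop)
        fun s hs => mul_ne_zero (pow_ne_zero _ (hsphere s hs).1) (hsphere s hs).2)
  have hdiff : 2 * π * I * ((T - V : ℝ) : ℂ) = -Rem := by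
    push_cast; linear_combination hcoeff.symm.trans hsplit
  have hnorm : ‖2 * π * I * ((T - V : ℝ) : ℂ)‖ = 2 * π * |T - V| := by
    rw [norm_mul, Complex.norm_real, Real.norm_eq_abs]
    simp [abs_of_pos Real.pi_pos]
  have := norm_circleIntegral_remainder_le ha0 ha K
  rw [← norm_neg, ← hdiff, hnorm] at this
  exact le_of_mul_le_mul_left this (by positivity)

theorem abs_sum_le_exp (ha0 : 0 ≤ a) (ha : a ≤ 3 / 10) (K : ℕ) :
    |∑ k ∈ range (K + 1), (-(a * (K - k))) ^ k / k.factorial|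
      ≤ 27 / 2 * Real.exp (-(K * a) / (1 - a)) := by
  obtain ⟨ρ, hρ2, hρ⟩ := exists_exp_mul_eq_self ha
  set E := Real.exp (-(K * a) / (1 - a))
  have hK : (0 : ℝ) ≤ K := K.cast_nonneg
  have h1a : 0 < 1 - a := by linarith
  have hρ1 : 1 ≤ ρ * (1 - a) := by nlinarith [Real.add_one_le_exp (a * ρ)]
  have hpole : Real.exp (-(a * K * ρ)) / (1 - a * ρ) ≤ 5 / 2 * E := by
    have hexp : Real.exp (-(a * K * ρ)) ≤ E := by
      refine Real.exp_le_exp.2 ?_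
      rw [neg_div, neg_le_neg_iff, div_le_iff₀ h1a]
      nlinarith [mul_nonneg hK ha0]
    have h25 : 2 / 5 ≤ 1 - a * ρ := by nlinarith
    rw [div_le_iff₀ (by linarith)]
    nlinarith [Real.exp_pos (-(K * a) / (1 - a))]
  have hgeom : 11 / 2 ^ K ≤ 11 * E := by
    have hbase : Real.exp (a / (1 - a)) ≤ 2 := by
      refine le_trans (Real.exp_le_exp.2 ?_) exp_three_sevenths_lt_two.le
      rw [div_le_iff₀ h1a]; linarith
    have hE : E⁻¹ ≤ 2 ^ K := by
      rw [← Real.exp_neg, neg_div, neg_neg, mul_div_assoc, Real.exp_nat_mul]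
      exact pow_le_pow_left₀ (Real.exp_pos _).le hbase K
    rw [div_eq_mul_inv]
    gcongr
    exact inv_le_of_inv_le₀ (Real.exp_pos _) hE
  have hV0 : 0 ≤ Real.exp (-(a * K * ρ)) / (1 - a * ρ) :=
    div_nonneg (Real.exp_pos _).le (by nlinarith)
  have := abs_sum_sub_residue_le ha0 ha hρ2 hρ K
  rw [abs_le] at this ⊢
  constructor <;> linarith

end

/-- bound (16), with `ν = λ(1 - e^{-ϑ})`,
`∑_{0 ≤ k ≤ w/z} (-1)^k ν^k (w-kz)^k/k! ≪ e^{-wν/(1-zν)} w²`. -/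
theorem stmt_15 (z : ℝ) (hz : 0 < z) :
    ∃ C > 0, ∀ (K : ℕ), 1 ≤ K → ∀ w ϑ : ℝ, w = K * z → 2 ≤ w →
      0 ≤ ϑ → ϑ ≤ w ^ (-(1 : ℝ)/3) →
      |∑ k ∈ Finset.range (K + 1),
          (-1 : ℝ) ^ k * (Real.exp (-z) * (1 - Real.exp (-ϑ))) ^ k * (w - k * z) ^ k
            / (Nat.factorial k)|
        ≤ C * Real.exp (-(w * (Real.exp (-z) * (1 - Real.exp (-ϑ))))
              / (1 - z * (Real.exp (-z) * (1 - Real.exp (-ϑ))))) * w ^ 2 := by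
  refine ⟨27 / 2, by norm_num, fun K _ w ϑ hw hw2 hϑ0 hϑ => ?_⟩
  set ν := Real.exp (-z) * (1 - Real.exp (-ϑ))
  have ha0 : 0 ≤ z * ν := mul_nonneg hz.le <| mul_nonneg (Real.exp_pos _).le <|
    sub_nonneg.2 (Real.exp_le_one_iff.2 (neg_nonpos.2 hϑ0))
  have ha : z * ν ≤ 3 / 10 :=
    mul_exp_neg_mul_one_sub_exp_neg_le z hϑ0 (hϑ.trans (rpow_neg_one_third_le hw2))
  have hsum : ∀ k ∈ range (K + 1), (-1 : ℝ) ^ k * ν ^ k * (w - k * z) ^ k / (Nat.factorial k)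
      = (-(z * ν * (K - k))) ^ k / k.factorial := fun k _ => by
    rw [hw, ← mul_pow, ← mul_pow]
    congr 2
    ring
  have hexponent : -(w * ν) / (1 - z * ν) = -(K * (z * ν)) / (1 - z * ν) := by rw [hw]; ring
  rw [sum_congr rfl hsum, hexponent]
  calc _ ≤ 27 / 2 * Real.exp (-(K * (z * ν)) / (1 - z * ν)) := abs_sum_le_exp ha0 ha K
    _ ≤ _ := le_mul_of_one_le_right (by positivity) (by nlinarith)
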